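/- arXiv:math/0204107 — 2 statements merged into one kernel-verified Lean document; each statement's English description precedes it below -/
import Mathlib

section
/- Let n ≥ 1, let H be a closed subspace of a complex Hilbert space L, let T = (T_1,…,T_n) be bounded operators on H and R = (R_1,…,R_n) bounded operators on L such that R is a dilation of T, i.e. R_i^* u = T_i^* u for all u ∈ H and all i. Then H^c(T) = L^c(R) ∩ H, and for every u ∈ H^c(T) and every i one has R_i^* u = T_i^* u ∈ H^c(T); consequently the compression of R to L^c(R) is a dilation of the compression of T to H^c(T). -/
open ContinuousLinearMap

noncomputable def wordProd {n : ℕ} {L : Type*} [NormedAddCommGroup L] [InnerProductSpace ℂ L]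
    (R : Fin n → L →L[ℂ] L) (α : List (Fin n)) : L →L[ℂ] L :=
  (α.map R).prod

/-- The maximal commuting piece space of a tuple. -/
noncomputable def commPieceSet {n : ℕ} {L : Type*} [NormedAddCommGroup L]
    [InnerProductSpace ℂ L] [CompleteSpace L] (R : Fin n → L →L[ℂ] L) : Set L :=
  {x : L | ∀ (i j : Fin n) (α : List (Fin n)),
    adjoint (R i) (adjoint (R j) (adjoint (wordProd R α) x)) =
    adjoint (R j) (adjoint (R i) (adjoint (wordProd R α) x))}


lemma wordProd_nil {n : ℕ} {L : Type*} [NormedAddCommGroup L] [InnerProductSpace ℂ L]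
    (R : Fin n → L →L[ℂ] L) : wordProd R [] = 1 := rfl

lemma wordProd_cons {n : ℕ} {L : Type*} [NormedAddCommGroup L] [InnerProductSpace ℂ L]
    (R : Fin n → L →L[ℂ] L) (a : Fin n) (α : List (Fin n)) :
    wordProd R (a :: α) = (R a).comp (wordProd R α) := by
  simp [wordProd, List.prod_cons, ContinuousLinearMap.mul_def]

lemma dil_word {n : ℕ} {L : Type*} [NormedAddCommGroup L]
    [InnerProductSpace ℂ L] [CompleteSpace L]
    (H : Submodule ℂ L) [CompleteSpace H]
    (T : Fin n → H →L[ℂ] H) (R : Fin n → L →L[ℂ] L)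
    (hdil : ∀ (i : Fin n) (u : H), adjoint (R i) (u : L) = ((adjoint (T i)) u : L))
    (α : List (Fin n)) (u : H) :
    adjoint (wordProd R α) (u : L) = ((adjoint (wordProd T α)) u : L) := by
  induction α generalizing u with
  | nil => simp [wordProd_nil, ContinuousLinearMap.one_def, ContinuousLinearMap.adjoint_id]
  | cons a α ih =>
      rw [wordProd_cons, wordProd_cons, adjoint_comp, adjoint_comp]
      simp only [ContinuousLinearMap.comp_apply]
      rw [hdil a u, ih]

/-- if `R` on `L` is a dilation of `T` on the closed subspace `H`
(`R_i^* u = T_i^* u` for `u ∈ H`), then `H^c(T) = L^c(R) ∩ H`, and the compression of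
`R` to `L^c(R)` is a dilation of the compression of `T` to `H^c(T)`. -/
theorem stmt5 {n : ℕ} (hn : 1 ≤ n) {L : Type*} [NormedAddCommGroup L]
    [InnerProductSpace ℂ L] [CompleteSpace L]
    (H : Submodule ℂ L) [CompleteSpace H]
    (T : Fin n → H →L[ℂ] H) (R : Fin n → L →L[ℂ] L)
    (hdil : ∀ (i : Fin n) (u : H), adjoint (R i) (u : L) = ((adjoint (T i)) u : L)) :
    (Subtype.val '' commPieceSet T : Set L) = commPieceSet R ∩ (H : Set L) ∧
    ∀ u : H, u ∈ commPieceSet T → ∀ i : Fin n,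
      adjoint (T i) u ∈ commPieceSet T ∧
      adjoint (R i) (u : L) = ((adjoint (T i)) u : L) := by
  have key : ∀ (u : H) (i j : Fin n) (α : List (Fin n)),
      adjoint (R i) (adjoint (R j) (adjoint (wordProd R α) (u : L))) =
      ((adjoint (T i) (adjoint (T j) (adjoint (wordProd T α) u)) : H) : L) := by
    intro u i j α
    rw [dil_word H T R hdil α u, hdil j, hdil i]
  constructor
  · ext x
    constructor
    · rintro ⟨u, hu, rfl⟩
      refine ⟨fun i j α => ?_, u.2⟩
      rw [key u i j α, key u j i α, hu i j α]
    · rintro ⟨hx, hxH⟩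
      refine ⟨⟨x, hxH⟩, fun i j α => ?_, rfl⟩
      have h2 : ((adjoint (T i) (adjoint (T j) (adjoint (wordProd T α) (⟨x, hxH⟩ : H))) : H) : L)
          = ((adjoint (T j) (adjoint (T i) (adjoint (wordProd T α) (⟨x, hxH⟩ : H))) : H) : L) := by
        rw [← key ⟨x, hxH⟩ i j α, ← key ⟨x, hxH⟩ j i α]
        exact hx i j α
      exact Subtype.coe_injective h2
  · intro u hu i
    refine ⟨fun j k α => ?_, hdil i u⟩
    have h := hu j k (i :: α)
    rwa [wordProd_cons, adjoint_comp, ContinuousLinearMap.comp_apply] at h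
end

section
/- Let n ≥ 2 and let W_1,…,W_n be bounded operators on a complex Hilbert space L satisfying the Cuntz relations W_i^* W_j = δ_{ij} I and W_1 W_1^* + ⋯ + W_n W_n^* = I. Let P denote the orthogonal projection of L onto the closed subspace L^c(W). Then the compressed tuple W_i^c = P W_i restricted to L^c(W) is a spherical unitary on L^c(W) (provided L^c(W) ≠ {0}); concretely, for every x ∈ L^c(W): (i) Σ_{i=1}^n P(W_i(W_i^* x)) = x, and (ii) P(W_i(W_i^* x)) = W_i^*(P(W_i x)) for each i (each compression is normal), while the compressions commute with each other. -/
open ContinuousLinearMap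

/-!
Write `C = L^c(W)` and `Φ T = ∑ j, W j T (W j)^*`. For `x ∈ C` the vectors `gₘ x = Φ^m (W i) x`
have the same inner products with `C` as `W i x`, and `⟪g_p x, g_q y⟫` is `⟪x, y⟫` for `p = q`
and `⟪(W i)^* x, (W i)^* y⟫` otherwise, because `(W j)^* (Φ T) = T (W j)^*` and the `(W j)^*`
leave `C` invariant and commute on it. Such a Gram matrix makes the Cesàro means of `(gₘ x)`
converge; as `gₘ x` satisfies each defining relation of `C` once `m` is large, the limit lies in
`C`, so it is `P (W i x)`. Passing to the limit in the Gram matrix gives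
`⟪P (W i x), P (W i y)⟫ = ⟪(W i)^* x, (W i)^* y⟫` on `C`, and the three claims follow by testing
against vectors of `C`.
-/

open Finset Filter Topology

-- Real scalars, so that `Filter.Tendsto.cesaro_smul` applies.
noncomputable def cesaroMean {E : Type*} [AddCommGroup E] [Module ℝ E] (v : ℕ → E) (M : ℕ) : E :=
  (M : ℝ)⁻¹ • ∑ m ∈ range M, v m

section Cesaro

variable {𝕜 E : Type*} [RCLike 𝕜] [NormedAddCommGroup E] [InnerProductSpace 𝕜 E]

local notation "⟪" x ", " y "⟫" => inner 𝕜 x y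

theorem inner_sum_range_sum_range {v w : ℕ → E} {a c : 𝕜}
    (hvw : ∀ p q, ⟪v p, w q⟫ = if p = q then c else a) (M N : ℕ) :
    ⟪∑ p ∈ range M, v p, ∑ q ∈ range N, w q⟫ = M * N * a + (min M N : ℕ) * (c - a) := by
  have hrow : ∀ p, ⟪v p, ∑ q ∈ range N, w q⟫ = N * a + if p ∈ range N then c - a else 0 := by
    intro p
    have hsplit : ∀ q, ⟪v p, w q⟫ = a + if p = q then c - a else 0 := by
      intro q; rw [hvw]; split_ifs <;> ring
    simp only [inner_sum, hsplit, sum_add_distrib, sum_ite_eq, sum_const, card_range, nsmul_eq_mul]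
  simp only [sum_inner, hrow, sum_add_distrib, sum_const, card_range, nsmul_eq_mul, sum_ite_mem,
    range_inter_range]
  ring

variable [NormedSpace ℝ E] [IsScalarTower ℝ 𝕜 E]

theorem inner_cesaroMean {v w : ℕ → E} {a c : 𝕜}
    (hvw : ∀ p q, ⟪v p, w q⟫ = if p = q then c else a) {M N : ℕ} (hM : 1 ≤ M) (hN : 1 ≤ N) :
    ⟪cesaroMean v M, cesaroMean w N⟫ = a + ((max M N : ℕ) : 𝕜)⁻¹ * (c - a) := by
  have hmul : ((min M N : ℕ) : 𝕜) * (max M N : ℕ) = M * N := by exact_mod_cast min_mul_max M N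
  have hmax : ((max M N : ℕ) : 𝕜) ≠ 0 := Nat.cast_ne_zero.mpr (by omega)
  have hM' : (M : 𝕜) ≠ 0 := Nat.cast_ne_zero.mpr (by omega)
  have hN' : (N : 𝕜) ≠ 0 := Nat.cast_ne_zero.mpr (by omega)
  simp only [cesaroMean, RCLike.real_smul_eq_coe_smul (K := 𝕜), inner_smul_left, inner_smul_right,
    inner_sum_range_sum_range hvw, RCLike.conj_ofReal]
  push_cast
  field_simp
  linear_combination (c - a) * hmul

theorem norm_sub_cesaroMean_sq_le {v : ℕ → E} {a b : 𝕜}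
    (hv : ∀ p q, ⟪v p, v q⟫ = if p = q then b else a) {M N : ℕ} (hN : 1 ≤ N) (hNM : N ≤ M) :
    ‖cesaroMean v M - cesaroMean v N‖ ^ 2 ≤ ‖b - a‖ / N := by
  have hM : 1 ≤ M := hN.trans hNM
  have hinner : ⟪cesaroMean v M - cesaroMean v N, cesaroMean v M - cesaroMean v N⟫
      = (((N : ℝ)⁻¹ - (M : ℝ)⁻¹ : ℝ) : 𝕜) * (b - a) := by
    simp only [inner_sub_left, inner_sub_right, inner_cesaroMean hv hM hN,
      inner_cesaroMean hv hN hM, inner_cesaroMean hv hM hM, inner_cesaroMean hv hN hN, max_self, max_eq_left hNM,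
      max_eq_right hNM]
    push_cast
    ring
  have hcoef : 0 ≤ (N : ℝ)⁻¹ - (M : ℝ)⁻¹ :=
    sub_nonneg.mpr (inv_anti₀ (by exact_mod_cast hN) (by exact_mod_cast hNM))
  calc ‖cesaroMean v M - cesaroMean v N‖ ^ 2
      = ((N : ℝ)⁻¹ - (M : ℝ)⁻¹) * RCLike.re (b - a) := by
        rw [norm_sq_eq_re_inner (𝕜 := 𝕜), hinner, RCLike.re_ofReal_mul]
    _ ≤ ((N : ℝ)⁻¹ - (M : ℝ)⁻¹) * ‖b - a‖ := mul_le_mul_of_nonneg_left (RCLike.re_le_norm _) hcoef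
    _ ≤ (N : ℝ)⁻¹ * ‖b - a‖ := by gcongr; exact sub_le_self _ (by positivity)
    _ = ‖b - a‖ / N := by ring

theorem cauchySeq_cesaroMean {v : ℕ → E} {a b : 𝕜}
    (hv : ∀ p q, ⟪v p, v q⟫ = if p = q then b else a) : CauchySeq (cesaroMean v) := by
  rw [← cauchySeq_shift 1]
  refine cauchySeq_of_le_tendsto_0' (fun N => √(‖b - a‖ / (N + 1 : ℕ))) (fun N M hNM => ?_) ?_
  · rw [dist_comm, dist_eq_norm]
    exact Real.le_sqrt_of_sq_le (norm_sub_cesaroMean_sq_le hv (by omega) (by omega))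
  · have h := (Real.continuous_sqrt.tendsto 0).comp
      ((tendsto_const_div_atTop_nhds_zero_nat ‖b - a‖).comp (tendsto_add_atTop_nat 1))
    rwa [Real.sqrt_zero] at h

theorem inner_eq_of_tendsto_cesaroMean {v w : ℕ → E} {a c : 𝕜}
    (hvw : ∀ p q, ⟪v p, w q⟫ = if p = q then c else a) {u u' : E}
    (hv : Tendsto (cesaroMean v) atTop (𝓝 u)) (hw : Tendsto (cesaroMean w) atTop (𝓝 u')) :
    ⟪u, u'⟫ = a := by
  have hlim : Tendsto (fun M : ℕ => a + (M : 𝕜)⁻¹ * (c - a)) atTop (𝓝 a) := by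
    simpa using
      tendsto_const_nhds.add ((tendsto_inv_atTop_nhds_zero_nat (𝕜 := 𝕜)).mul_const (c - a))
  refine tendsto_nhds_unique (hv.inner hw) (hlim.congr' ?_)
  filter_upwards [eventually_ge_atTop 1] with M hM
  rw [inner_cesaroMean hvw hM hM, max_self]

end Cesaro

theorem ContinuousLinearMap.eq_of_tendsto_cesaroMean {E F : Type*} [NormedAddCommGroup E]
    [NormedSpace ℝ E] [NormedAddCommGroup F] [NormedSpace ℝ F] (f : E →L[ℝ] F) {v : ℕ → E} {u : E}
    {l : F} (hv : Tendsto (cesaroMean v) atTop (𝓝 u))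
    (hf : Tendsto (fun m => f (v m)) atTop (𝓝 l)) :
    f u = l := by
  refine tendsto_nhds_unique ((f.continuous.tendsto u).comp hv) ?_
  convert hf.cesaro_smul using 2 with M
  simp [cesaroMean, map_sum]

noncomputable def sumConj {ι 𝕜 E : Type*} [Fintype ι] [RCLike 𝕜] [NormedAddCommGroup E]
    [InnerProductSpace 𝕜 E] [CompleteSpace E] (W : ι → E →L[𝕜] E) (T : E →L[𝕜] E) : E →L[𝕜] E :=
  ∑ j, W j ∘L T ∘L adjoint (W j)

section Cuntz

variable {ι 𝕜 E : Type*} [RCLike 𝕜] [NormedAddCommGroup E] [InnerProductSpace 𝕜 E]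
  [CompleteSpace E] {W : ι → E →L[𝕜] E}

local notation "⟪" x ", " y "⟫" => inner 𝕜 x y

theorem adjoint_apply_apply_of_isom [DecidableEq ι]
    (hisom : ∀ i j, adjoint (W i) ∘L W j = if i = j then 1 else 0) (j k : ι) (y : E) :
    adjoint (W j) (W k y) = if j = k then y else 0 := by
  simpa [apply_ite (fun f : E →L[𝕜] E => f y)] using congr($(hisom j k) y)

theorem inner_apply_apply_of_isom [DecidableEq ι]
    (hisom : ∀ i j, adjoint (W i) ∘L W j = if i = j then 1 else 0) (j k : ι) (a b : E) :
    ⟪W j a, W k b⟫ = if j = k then ⟪a, b⟫ else 0 := by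
  rw [← adjoint_inner_right, adjoint_apply_apply_of_isom hisom]
  split_ifs <;> simp

variable [Fintype ι]

theorem sum_apply_adjoint_apply (hcuntz : ∑ j, W j ∘L adjoint (W j) = 1) (y : E) :
    ∑ j, W j (adjoint (W j) y) = y := by
  simpa using congr($hcuntz y)

theorem sum_inner_adjoint_apply (hcuntz : ∑ j, W j ∘L adjoint (W j) = 1) (x y : E) :
    ∑ j, ⟪adjoint (W j) x, adjoint (W j) y⟫ = ⟪x, y⟫ := by
  simp only [adjoint_inner_left, ← inner_sum, sum_apply_adjoint_apply hcuntz]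

theorem sumConj_apply (T : E →L[𝕜] E) (y : E) :
    sumConj W T y = ∑ j, W j (T (adjoint (W j) y)) := by
  simp [sumConj]

theorem inner_sumConj_apply_right (T : E →L[𝕜] E) (v y : E) :
    ⟪v, sumConj W T y⟫ = ∑ j, ⟪adjoint (W j) v, T (adjoint (W j) y)⟫ := by
  simp only [sumConj_apply, inner_sum, adjoint_inner_left]

theorem adjoint_sumConj_apply [DecidableEq ι]
    (hisom : ∀ i j, adjoint (W i) ∘L W j = if i = j then 1 else 0) (k : ι) (T : E →L[𝕜] E)
    (y : E) : adjoint (W k) (sumConj W T y) = T (adjoint (W k) y) := by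
  simp [sumConj_apply, adjoint_apply_apply_of_isom hisom]

theorem inner_sumConj_apply_sumConj_apply [DecidableEq ι]
    (hisom : ∀ i j, adjoint (W i) ∘L W j = if i = j then 1 else 0) (T S : E →L[𝕜] E) (x y : E) :
    ⟪sumConj W T x, sumConj W S y⟫ = ∑ j, ⟪T (adjoint (W j) x), S (adjoint (W j) y)⟫ := by
  simp [sumConj_apply, inner_sum, sum_inner, inner_apply_apply_of_isom hisom]

end Cuntz

section CommPiece

variable {n : ℕ} {L : Type*} [NormedAddCommGroup L] [InnerProductSpace ℂ L] [CompleteSpace L]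
  {W : Fin n → L →L[ℂ] L}

local notation "⟪" x ", " y "⟫" => inner ℂ x y

theorem adjoint_wordProd_nil_apply (x : L) : adjoint (wordProd W []) x = x := by
  simp [wordProd, ← star_eq_adjoint]

theorem adjoint_wordProd_cons_apply (a : Fin n) (α : List (Fin n)) (x : L) :
    adjoint (wordProd W (a :: α)) x = adjoint (wordProd W α) (adjoint (W a) x) := by
  simp [wordProd, ← star_eq_adjoint, star_mul]

theorem adjoint_wordProd_iterate_sumConj_apply
    (hisom : ∀ i j, adjoint (W i) ∘L W j = if i = j then 1 else 0) (T : L →L[ℂ] L)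
    (α : List (Fin n)) (m : ℕ) (y : L) :
    adjoint (wordProd W α) ((sumConj W)^[m + α.length] T y)
      = (sumConj W)^[m] T (adjoint (wordProd W α) y) := by
  induction α generalizing m y with
  | nil => simp [adjoint_wordProd_nil_apply]
  | cons a α ih =>
    rw [adjoint_wordProd_cons_apply, List.length_cons, ← add_assoc, Function.iterate_succ_apply',
      adjoint_sumConj_apply hisom, ih, adjoint_wordProd_cons_apply]

def commPieceSubmodule (W : Fin n → L →L[ℂ] L) : Submodule ℂ L where
  carrier := commPieceSet W
  add_mem' {x y} hx hy i j α := by simp only [map_add, hx i j α, hy i j α]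
  zero_mem' i j α := by simp only [map_zero]
  smul_mem' c x hx i j α := by simp only [map_smul, hx i j α]

theorem adjoint_mem_commPieceSet {x : L} (hx : x ∈ commPieceSet W) (k : Fin n) :
    adjoint (W k) x ∈ commPieceSet W := by
  intro i j α
  simpa only [adjoint_wordProd_cons_apply] using hx i j (k :: α)

theorem adjoint_comm_of_mem_commPieceSet {x : L} (hx : x ∈ commPieceSet W) (i j : Fin n) :
    adjoint (W i) (adjoint (W j) x) = adjoint (W j) (adjoint (W i) x) := by
  simpa only [adjoint_wordProd_nil_apply] using hx i j []

theorem inner_iterate_sumConj_apply_of_mem (hcuntz : ∑ j, W j ∘L adjoint (W j) = 1) (i : Fin n)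
    (m : ℕ) {v : L} (hv : v ∈ commPieceSet W) (y : L) :
    ⟪v, (sumConj W)^[m] (W i) y⟫ = ⟪v, W i y⟫ := by
  induction m generalizing v y with
  | zero => rfl
  | succ m ih =>
    rw [Function.iterate_succ_apply', inner_sumConj_apply_right]
    simp_rw [ih (adjoint_mem_commPieceSet hv _), ← adjoint_inner_left (W i),
      adjoint_comm_of_mem_commPieceSet hv i, sum_inner_adjoint_apply hcuntz]

theorem inner_iterate_sumConj_apply_of_le
    (hisom : ∀ i j, adjoint (W i) ∘L W j = if i = j then 1 else 0)
    (hcuntz : ∑ j, W j ∘L adjoint (W j) = 1) (i : Fin n) {p q : ℕ} (hpq : p ≤ q) {x y : L}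
    (hx : x ∈ commPieceSet W) (hy : y ∈ commPieceSet W) :
    ⟪(sumConj W)^[p] (W i) x, (sumConj W)^[q] (W i) y⟫
      = if p = q then ⟪x, y⟫ else ⟪adjoint (W i) x, adjoint (W i) y⟫ := by
  induction p generalizing q x y with
  | zero =>
    cases q with
    | zero => simp [inner_apply_apply_of_isom hisom]
    | succ q =>
      rw [Function.iterate_zero_apply, Function.iterate_succ_apply', ← adjoint_inner_right,
        adjoint_sumConj_apply hisom, inner_iterate_sumConj_apply_of_mem hcuntz i q hx,
        ← adjoint_inner_left (W i), if_neg (by omega)]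
  | succ p ih =>
    obtain ⟨q, rfl⟩ := Nat.exists_eq_add_of_le' (Nat.one_le_of_lt hpq)
    rw [Function.iterate_succ_apply', Function.iterate_succ_apply',
      inner_sumConj_apply_sumConj_apply hisom]
    simp_rw [ih (q := q) (by omega) (adjoint_mem_commPieceSet hx _) (adjoint_mem_commPieceSet hy _),
      Nat.add_right_cancel_iff]
    split_ifs
    · exact sum_inner_adjoint_apply hcuntz x y
    · simp_rw [adjoint_comm_of_mem_commPieceSet hx i, adjoint_comm_of_mem_commPieceSet hy i]
      exact sum_inner_adjoint_apply hcuntz _ _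

theorem inner_iterate_sumConj_apply
    (hisom : ∀ i j, adjoint (W i) ∘L W j = if i = j then 1 else 0)
    (hcuntz : ∑ j, W j ∘L adjoint (W j) = 1) (i : Fin n) {x y : L}
    (hx : x ∈ commPieceSet W) (hy : y ∈ commPieceSet W) (p q : ℕ) :
    ⟪(sumConj W)^[p] (W i) x, (sumConj W)^[q] (W i) y⟫
      = if p = q then ⟪x, y⟫ else ⟪adjoint (W i) x, adjoint (W i) y⟫ := by
  rcases le_total p q with hpq | hqp
  · exact inner_iterate_sumConj_apply_of_le hisom hcuntz i hpq hx hy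
  · rw [← inner_conj_symm, inner_iterate_sumConj_apply_of_le hisom hcuntz i hqp hy hx]
    obtain rfl | hne := eq_or_ne p q
    · simp
    · simp [hne, hne.symm]

theorem adjoint_comm_iterate_sumConj_apply
    (hisom : ∀ i j, adjoint (W i) ∘L W j = if i = j then 1 else 0) (T : L →L[ℂ] L)
    {x : L} (hx : x ∈ commPieceSet W) (i j : Fin n) (α : List (Fin n)) {m : ℕ}
    (hm : α.length + 2 ≤ m) :
    adjoint (W i) (adjoint (W j) (adjoint (wordProd W α) ((sumConj W)^[m] T x)))
      = adjoint (W j) (adjoint (W i) (adjoint (wordProd W α) ((sumConj W)^[m] T x))) := by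
  obtain ⟨k, rfl⟩ := Nat.exists_eq_add_of_le' hm
  rw [show k + (α.length + 2) = k + 1 + 1 + α.length by omega,
    adjoint_wordProd_iterate_sumConj_apply hisom]
  simp only [Function.iterate_succ_apply', adjoint_sumConj_apply hisom, hx i j α]

end CommPiece

def IsOrthogonalProjectionOnto (𝕜 : Type*) {E : Type*} [RCLike 𝕜] [NormedAddCommGroup E]
    [InnerProductSpace 𝕜 E] (K : Submodule 𝕜 E) (P : E → E) : Prop :=
  ∀ x, P x ∈ K ∧ ∀ y ∈ K, inner 𝕜 (x - P x) y = 0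

section Projection

variable {𝕜 E : Type*} [RCLike 𝕜] [NormedAddCommGroup E] [InnerProductSpace 𝕜 E]

local notation "⟪" x ", " y "⟫" => inner 𝕜 x y

theorem Submodule.eq_of_forall_inner_eq (K : Submodule 𝕜 E) {u u' : E} (hu : u ∈ K)
    (hu' : u' ∈ K) (h : ∀ w ∈ K, ⟪w, u⟫ = ⟪w, u'⟫) : u = u' := by
  rw [← sub_eq_zero, ← inner_self_eq_zero (𝕜 := 𝕜), inner_sub_right,
    h _ (K.sub_mem hu hu'), sub_self]

namespace IsOrthogonalProjectionOnto

variable {K : Submodule 𝕜 E} {P : E → E}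

theorem inner_apply_apply (hP : IsOrthogonalProjectionOnto 𝕜 K P) (a z : E) :
    ⟪a, P z⟫ = ⟪P a, P z⟫ := by
  rw [← sub_eq_zero, ← inner_sub_left, (hP a).2 _ (hP z).1]

theorem inner_apply_of_mem (hP : IsOrthogonalProjectionOnto 𝕜 K P) {w : E} (hw : w ∈ K)
    (z : E) : ⟪w, P z⟫ = ⟪w, z⟫ := by
  have h := (hP z).2 w hw
  rw [inner_sub_left, sub_eq_zero] at h
  rw [← inner_conj_symm w (P z), ← h, inner_conj_symm]

theorem apply_eq_of_forall_inner (hP : IsOrthogonalProjectionOnto 𝕜 K P) {u z : E}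
    (hu : u ∈ K) (h : ∀ w ∈ K, ⟪w, u⟫ = ⟪w, z⟫) : P z = u :=
  K.eq_of_forall_inner_eq (hP z).1 hu fun w hw => (hP.inner_apply_of_mem hw z).trans (h w hw).symm

theorem apply_eq_self (hP : IsOrthogonalProjectionOnto 𝕜 K P) {x : E} (hx : x ∈ K) : P x = x :=
  hP.apply_eq_of_forall_inner hx fun _ _ => rfl

end IsOrthogonalProjectionOnto

end Projection

section CompressedTuple

variable {n : ℕ} {L : Type*} [NormedAddCommGroup L] [InnerProductSpace ℂ L] [CompleteSpace L]
  {W : Fin n → L →L[ℂ] L} {P : L →L[ℂ] L}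

local notation "⟪" x ", " y "⟫" => inner ℂ x y

theorem tendsto_cesaroMean_iterate_sumConj_apply
    (hisom : ∀ i j, adjoint (W i) ∘L W j = if i = j then 1 else 0)
    (hcuntz : ∑ j, W j ∘L adjoint (W j) = 1)
    (hP : IsOrthogonalProjectionOnto ℂ (commPieceSubmodule W) P) (i : Fin n) {x : L}
    (hx : x ∈ commPieceSet W) :
    Tendsto (cesaroMean fun m => (sumConj W)^[m] (W i) x) atTop (𝓝 (P (W i x))) := by
  obtain ⟨u, hu⟩ := cauchySeq_tendsto_of_complete
    (cauchySeq_cesaroMean (inner_iterate_sumConj_apply hisom hcuntz i hx hx))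
  have hmem : u ∈ commPieceSet W := by
    intro i' j' α
    let D : L →L[ℂ] L := (adjoint (W i') ∘L adjoint (W j') - adjoint (W j') ∘L adjoint (W i'))
      ∘L adjoint (wordProd W α)
    refine sub_eq_zero.mp ((D.restrictScalars ℝ).eq_of_tendsto_cesaroMean hu
      (tendsto_const_nhds.congr' ?_))
    filter_upwards [eventually_ge_atTop (α.length + 2)] with m hm
    simp [D, adjoint_comm_iterate_sumConj_apply hisom _ hx i' j' α hm]
  have hinner : ∀ w ∈ commPieceSubmodule W, ⟪w, u⟫ = ⟪w, W i x⟫ := fun w hw =>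
    ((innerSL ℂ w).restrictScalars ℝ).eq_of_tendsto_cesaroMean hu (by
      simp_rw [coe_restrictScalars', innerSL_apply_apply,
        inner_iterate_sumConj_apply_of_mem hcuntz i _ hw]
      exact tendsto_const_nhds)
  rwa [hP.apply_eq_of_forall_inner hmem hinner]

theorem inner_proj_apply_eq_inner_adjoint_apply
    (hisom : ∀ i j, adjoint (W i) ∘L W j = if i = j then 1 else 0)
    (hcuntz : ∑ j, W j ∘L adjoint (W j) = 1)
    (hP : IsOrthogonalProjectionOnto ℂ (commPieceSubmodule W) P) (i : Fin n) {x y : L}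
    (hx : x ∈ commPieceSet W) (hy : y ∈ commPieceSet W) :
    ⟪P (W i x), P (W i y)⟫ = ⟪adjoint (W i) x, adjoint (W i) y⟫ :=
  inner_eq_of_tendsto_cesaroMean (inner_iterate_sumConj_apply hisom hcuntz i hx hy)
    (tendsto_cesaroMean_iterate_sumConj_apply hisom hcuntz hP i hx)
    (tendsto_cesaroMean_iterate_sumConj_apply hisom hcuntz hP i hy)

end CompressedTuple

theorem stmt12_general {n : ℕ} {L : Type*} [NormedAddCommGroup L]
    [InnerProductSpace ℂ L] [CompleteSpace L]
    (W : Fin n → L →L[ℂ] L)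
    (hisom : ∀ i j : Fin n, adjoint (W i) ∘L W j = if i = j then 1 else 0)
    (hcuntz : ∑ i : Fin n, W i ∘L adjoint (W i) = 1)
    (P : L →L[ℂ] L)
    (hP : ∀ x : L, P x ∈ commPieceSet W ∧
      ∀ y ∈ commPieceSet W, (inner ℂ (x - P x) y : ℂ) = 0) :
    (∀ x ∈ commPieceSet W, ∑ i : Fin n, P (W i (adjoint (W i) x)) = x) ∧
    (∀ i : Fin n, ∀ x ∈ commPieceSet W,
      P (W i (adjoint (W i) x)) = adjoint (W i) (P (W i x))) ∧
    (∀ i j : Fin n, ∀ x ∈ commPieceSet W,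
      P (W i (P (W j x))) = P (W j (P (W i x)))) := by
  have hP : IsOrthogonalProjectionOnto ℂ (commPieceSubmodule W) P := hP
  refine ⟨fun x hx => ?_, fun i x hx => ?_, fun i j x hx => ?_⟩
  · rw [← map_sum, sum_apply_adjoint_apply hcuntz, hP.apply_eq_self hx]
  · refine hP.apply_eq_of_forall_inner (adjoint_mem_commPieceSet (hP _).1 i) fun w hw => ?_
    rw [adjoint_inner_right, hP.inner_apply_apply,
      inner_proj_apply_eq_inner_adjoint_apply hisom hcuntz hP i hw hx,
      adjoint_inner_left]
  · have hcomp : ∀ k l : Fin n, ∀ w ∈ commPieceSet W,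
        inner ℂ w (W k (P (W l x))) = inner ℂ (adjoint (W l) (adjoint (W k) w)) x := by
      intro k l w hw
      rw [← adjoint_inner_left, hP.inner_apply_of_mem (adjoint_mem_commPieceSet hw k),
        ← adjoint_inner_left]
    refine hP.apply_eq_of_forall_inner (hP _).1 fun w hw => ?_
    rw [hP.inner_apply_of_mem hw, hcomp j i w hw, hcomp i j w hw,
      adjoint_comm_of_mem_commPieceSet hw]

/-- for a Cuntz tuple `W` on `L` with `L^c(W) ≠ {0}`, the compressions
`W_i^c = P W_i|_{L^c(W)}` (where `P` is the orthogonal projection onto `L^c(W)`)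
form a spherical unitary: `Σ_i W_i^c (W_i^c)^* = I`, each `W_i^c` is normal, and the
compressions commute. -/
theorem stmt12 {n : ℕ} (hn : 2 ≤ n) {L : Type*} [NormedAddCommGroup L]
    [InnerProductSpace ℂ L] [CompleteSpace L]
    (W : Fin n → L →L[ℂ] L)
    (hisom : ∀ i j : Fin n, adjoint (W i) ∘L W j = if i = j then 1 else 0)
    (hcuntz : ∑ i : Fin n, W i ∘L adjoint (W i) = 1)
    (hne : commPieceSet W ≠ {0})
    (P : L →L[ℂ] L)
    (hP : ∀ x : L, P x ∈ commPieceSet W ∧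
      ∀ y ∈ commPieceSet W, (inner ℂ (x - P x) y : ℂ) = 0) :
    (∀ x ∈ commPieceSet W, ∑ i : Fin n, P (W i (adjoint (W i) x)) = x) ∧
    (∀ i : Fin n, ∀ x ∈ commPieceSet W,
      P (W i (adjoint (W i) x)) = adjoint (W i) (P (W i x))) ∧
    (∀ i j : Fin n, ∀ x ∈ commPieceSet W,
      P (W i (P (W j x))) = P (W j (P (W i x)))) :=
  stmt12_general W hisom hcuntz P hP
end
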